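/- arXiv:0807.0995 — 2 statements merged into one kernel-verified Lean document; each statement's English description precedes it below -/
import Mathlib

section
/- Let T be an invertible measure-class-preserving transformation of a standard probability space (X,m) and let p : (X,m) → (X̄,m̄) be a T-invariant measurable projection (p∘T = p a.e.) with disintegration m = ∫ m_{x̄} dm̄(x̄). Then for m̄-a.e. x̄ the conditional measure m_{x̄} is T-quasi-invariant and d(Tm_{x̄})/dm_{x̄}(x) = d(Tm)/dm(x) for m_{x̄}-a.e. x. -/
/-!
Push everything to `Y × X` along the graph `x ↦ (p x, x)`. Because the `m y` live on the fibres
and integrate to `μ`, the composition-product `p_*μ ⊗ m` is the graph image of `μ`. Since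
`p ∘ T = p`, moving the fibre coordinate by `T` turns this into the graph image of
`T_*μ = f • μ` (with `f = dT_*μ/dμ`), which is also `p_*μ ⊗ (f • m)`. Two composition-products
that agree on rectangles have a.e. equal fibres once `X` is countably generated, so
`T_*m_y = f • m_y` for a.e. `y`. Quasi-invariance follows because `f > 0` `μ`-a.e., and `μ`-null
sets are `m_y`-null for a.e. `y`.
-/

open MeasureTheory ProbabilityTheory
open scoped ENNReal

theorem Set.Countable.generatePiSystem {α : Type*} {S : Set (Set α)} (hS : S.Countable) :
    (generatePiSystem S).Countable := by
  refine ((Set.countable_ofPred_finite_subset hS).image fun t => ⋂₀ t).mono fun s hs => ?_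
  induction hs with
  | base h =>
    exact ⟨{_}, ⟨Set.finite_singleton _, Set.singleton_subset_iff.2 h⟩, Set.sInter_singleton _⟩
  | inter _ _ _ ih₁ ih₂ =>
    obtain ⟨t₁, ⟨hfin₁, hsub₁⟩, rfl⟩ := ih₁
    obtain ⟨t₂, ⟨hfin₂, hsub₂⟩, rfl⟩ := ih₂
    exact ⟨t₁ ∪ t₂, ⟨hfin₁.union hfin₂, Set.union_subset hsub₁ hsub₂⟩, Set.sInter_union _ _⟩

theorem MeasurableSpace.exists_countable_isPiSystem_generateFrom_eq {α : Type*}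
    [m : MeasurableSpace α] [CountablyGenerated α] :
    ∃ C : Set (Set α), C.Countable ∧ IsPiSystem C ∧ generateFrom C = m :=
  ⟨_, countable_countableGeneratingSet.generatePiSystem, isPiSystem_generatePiSystem _, by
    rw [generateFrom_generatePiSystem_eq, generateFrom_countableGeneratingSet]⟩

theorem MeasureTheory.Measure.map_withDensity_comp {α β : Type*} [MeasurableSpace α]
    [MeasurableSpace β] (μ : Measure α) {g : α → β} (hg : Measurable g) {f : β → ℝ≥0∞}
    (hf : Measurable f) :
    (μ.withDensity (f ∘ g)).map g = (μ.map g).withDensity f := by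
  ext s hs
  rw [Measure.map_apply hg hs, withDensity_apply _ (hg hs), withDensity_apply _ hs,
    setLIntegral_map hs hf hg, Function.comp_def]

namespace ProbabilityTheory.Kernel

/- `Kernel.ae_eq_of_compProd_eq` does not apply here: an unbounded density `f` makes
`η.withDensity f` an infinite kernel. -/
theorem ae_eq_withDensity_of_compProd_eq {α β : Type*} [MeasurableSpace α] [MeasurableSpace β]
    [MeasurableSpace.CountablyGenerated β] {μ : Measure α} [SigmaFinite μ] {κ η : Kernel α β}
    [IsFiniteKernel κ] [IsSFiniteKernel η] {f : β → ℝ≥0∞} (hf : Measurable f)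
    (h : μ ⊗ₘ κ = (μ ⊗ₘ η).withDensity (fun z => f z.2)) :
    ∀ᵐ a ∂μ, κ a = (η a).withDensity f := by
  have h_set : ∀ s, MeasurableSet s → ∀ᵐ a ∂μ, κ a s = (η a).withDensity f s := by
    intro s hs
    simp_rw [withDensity_apply _ hs]
    refine ae_eq_of_forall_setLIntegral_eq_of_sigmaFinite (κ.measurable_coe hs)
      (hf.setLIntegral_kernel hs) fun A hA _ => ?_
    rw [← Measure.compProd_apply_prod hA hs, h, withDensity_apply _ (hA.prod hs),
      Measure.setLIntegral_compProd (f := fun z => f z.2) (by fun_prop) hA hs]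
  obtain ⟨C, hC, hC_pi, hC_gen⟩ :=
    MeasurableSpace.exists_countable_isPiSystem_generateFrom_eq (α := β)
  have hC_meas : ∀ s ∈ C, MeasurableSet s := fun s hs => hC_gen ▸ .basic s hs
  filter_upwards [(ae_ball_iff hC).2 fun s hs => h_set s (hC_meas s hs), h_set _ .univ]
    with a h_on_C h_univ
  exact ext_of_generate_finite C hC_gen.symm hC_pi h_on_C h_univ

variable {X Y : Type*} [MeasurableSpace X] [MeasurableSpace Y] {μ : Measure X} {p : X → Y}
  {κ : Kernel Y X}

theorem compProd_eq_map_graph [SFinite μ] [IsSFiniteKernel κ] (hp : Measurable p)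
    (h_fiber : ∀ᵐ y ∂μ.map p, ∀ᵐ x ∂κ y, p x = y) (h_comp : κ ∘ₘ μ.map p = μ) :
    μ.map p ⊗ₘ κ = μ.map fun x => (p x, x) := by
  have h_graph : ∀ᵐ y ∂μ.map p, (Kernel.id ×ₖ κ) y = (κ.map fun x => (p x, x)) y := by
    filter_upwards [h_fiber] with y hy
    rw [prod_apply, id_apply, Measure.dirac_prod, map_apply _ (by fun_prop)]
    exact Measure.map_congr (by filter_upwards [hy] with x hx; rw [hx])
  calc μ.map p ⊗ₘ κ = (Kernel.id ×ₖ κ) ∘ₘ μ.map p := Measure.compProd_eq_comp_prod _ _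
    _ = (κ.map fun x => (p x, x)) ∘ₘ μ.map p := Measure.comp_congr h_graph
    _ = μ.map fun x => (p x, x) := by rw [← Measure.map_comp _ _ (by fun_prop), h_comp]

theorem map_eq_withDensity_rnDeriv_of_comp_eq [MeasurableSpace.CountablyGenerated X]
    [IsFiniteMeasure μ] [IsFiniteKernel κ] (hp : Measurable p)
    (h_fiber : ∀ᵐ y ∂μ.map p, ∀ᵐ x ∂κ y, p x = y) (h_comp : κ ∘ₘ μ.map p = μ)
    {T : X → X} (hT : Measurable T) (hpT : ∀ᵐ x ∂μ, p (T x) = p x) (hac : μ.map T ≪ μ) :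
    ∀ᵐ y ∂μ.map p, (κ y).map T = (κ y).withDensity ((μ.map T).rnDeriv μ) := by
  set f := (μ.map T).rnDeriv μ
  have hg : Measurable fun x => (p x, x) := hp.prodMk measurable_id
  have h_graph := compProd_eq_map_graph hp h_fiber h_comp
  have h_map : μ.map p ⊗ₘ κ.map T = (μ.withDensity f).map fun x => (p x, x) := by
    rw [Measure.compProd_map hT, h_graph, Measure.map_map (by fun_prop) hg,
      Measure.withDensity_rnDeriv_eq _ _ hac, Measure.map_map hg hT]
    exact Measure.map_congr (by filter_upwards [hpT] with x hx; simp [hx])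
  have h_density : (μ.map p ⊗ₘ κ).withDensity (fun z => f z.2) =
      (μ.withDensity f).map fun x => (p x, x) := by
    rw [h_graph]
    exact (Measure.map_withDensity_comp μ hg (f := fun z => f z.2) (by fun_prop)).symm
  filter_upwards [ae_eq_withDensity_of_compProd_eq (Measure.measurable_rnDeriv _ _)
    (h_map.trans h_density.symm)] with y hy
  rwa [map_apply _ hT] at hy

end ProbabilityTheory.Kernel

theorem stmt_14_general {X Y : Type*} [MeasurableSpace X] [StandardBorelSpace X]
    [MeasurableSpace Y] [StandardBorelSpace Y]
    (μ : Measure X) [IsProbabilityMeasure μ]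
    (T : X → X) (hT : Measurable T)
    (hqi : μ.map T ≪ μ ∧ μ ≪ μ.map T)
    (p : X → Y) (hp : Measurable p)
    (hpT : ∀ᵐ x ∂μ, p (T x) = p x)
    (m : Y → Measure X) (hm : ∀ s : Set X, MeasurableSet s → Measurable (fun y => m y s))
    (hmprob : ∀ y, IsProbabilityMeasure (m y))
    (hfiber : ∀ᵐ y ∂(μ.map p), m y (p ⁻¹' {y}) = 1)
    (hdisint : ∀ s : Set X, MeasurableSet s → μ s = ∫⁻ y, m y s ∂(μ.map p)) :
    ∀ᵐ y ∂(μ.map p),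
      ((m y).map T ≪ m y ∧ m y ≪ (m y).map T) ∧
      ∀ᵐ x ∂(m y), ((m y).map T).rnDeriv (m y) x = (μ.map T).rnDeriv μ x := by
  let κ : Kernel Y X := ⟨m, Measure.measurable_of_measurable_coe m hm⟩
  have : IsMarkovKernel κ := ⟨hmprob⟩
  have h_fiber : ∀ᵐ y ∂μ.map p, ∀ᵐ x ∂κ y, p x = y := by
    filter_upwards [hfiber] with y hy
    exact mem_ae_iff.2 ((prob_compl_eq_zero_iff (hp (measurableSet_singleton y))).2 hy)
  have h_comp : κ ∘ₘ μ.map p = μ := by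
    ext s hs
    rw [Measure.bind_apply hs κ.aemeasurable, hdisint s hs]
    rfl
  have h_pos : ∀ᵐ y ∂μ.map p, ∀ᵐ x ∂κ y, (μ.map T).rnDeriv μ x ≠ 0 := by
    refine Measure.ae_ae_of_ae_comp ?_
    rw [h_comp]
    filter_upwards [hqi.2.ae_le (Measure.rnDeriv_pos hqi.1)] with x hx using hx.ne'
  filter_upwards [κ.map_eq_withDensity_rnDeriv_of_comp_eq hp h_fiber h_comp hT hpT hqi.1, h_pos]
    with y h_eq h_pos
  change (m y).map T = _ at h_eq
  rw [h_eq]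
  exact ⟨⟨withDensity_absolutelyContinuous _ _,
    withDensity_absolutelyContinuous' (Measure.measurable_rnDeriv _ _).aemeasurable h_pos⟩,
    Measure.rnDeriv_withDensity _ (Measure.measurable_rnDeriv _ _)⟩

/-- If `T` is an invertible measure-class-preserving transformation of a standard
probability space `(X, μ)` and `p : X → Y` is a `T`-invariant projection with
disintegration `μ = ∫ m_y d(p_*μ)(y)`, then for a.e. `y` the conditional measure
`m_y` is `T`-quasi-invariant and its Radon–Nikodym derivative under `T` agrees
a.e. with that of `μ`. -/
theorem stmt_14 {X Y : Type*} [Nonempty X] [MeasurableSpace X] [StandardBorelSpace X]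
    [MeasurableSpace Y] [StandardBorelSpace Y]
    (μ : Measure X) [IsProbabilityMeasure μ]
    (T : X → X) (hT : Measurable T) (hTbij : Function.Bijective T)
    (hTinv : Measurable (Function.invFun T))
    (hqi : μ.map T ≪ μ ∧ μ ≪ μ.map T)
    (p : X → Y) (hp : Measurable p)
    (hpT : ∀ᵐ x ∂μ, p (T x) = p x)
    (m : Y → Measure X) (hm : ∀ s : Set X, MeasurableSet s → Measurable (fun y => m y s))
    (hmprob : ∀ y, IsProbabilityMeasure (m y))
    (hfiber : ∀ᵐ y ∂(μ.map p), m y (p ⁻¹' {y}) = 1)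
    (hdisint : ∀ s : Set X, MeasurableSet s → μ s = ∫⁻ y, m y s ∂(μ.map p)) :
    ∀ᵐ y ∂(μ.map p),
      ((m y).map T ≪ m y ∧ m y ≪ (m y).map T) ∧
      ∀ᵐ x ∂(m y), ((m y).map T).rnDeriv (m y) x = (μ.map T).rnDeriv μ x :=
  stmt_14_general μ T hT hqi p hp hpT m hm hmprob hfiber hdisint
end

section
/- Let G be a countable group acting freely and measure-class-preservingly on a standard probability space (X,m), with Radon–Nikodym derivatives r_g(x) = d(gm)/dm(x). If for a.e. x in a G-invariant set A the set M_x of g ∈ G maximizing r_{g^{-1}}(x)·(normalization at x) — i.e., the set of maximal-weight atoms of the orbit measure μ_x(gx) = d(g^{-1}m)/dm(x) — is nonempty and finite, then A admits a measurable G-orbit selection (a measurable map π : A → A constant on orbits with π(x) ∈ Gx), and hence A is contained in the dissipative part. -/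
/-!
The densities `r g` form a multiplicative cocycle, so along an orbit the weights
`μₓ (g • x) = r g⁻¹ x` change only by a positive finite factor and the finite set `Mₓ` of
maximal-weight atoms depends only on the orbit. Fixing a Borel injection `f : X → ℝ`, the
`f`-least point of `Mₓ` is then a measurable orbit selection `π`, and the points fixed by `π`
form a wandering set whose translates cover `A`; freeness makes the translates disjoint.
-/

open MeasureTheory Pointwise
open scoped ENNReal

lemma MeasurableEquiv.map_withDensity {α β : Type*} [MeasurableSpace α] [MeasurableSpace β]
    (e : α ≃ᵐ β) (μ : Measure α) (ρ : α → ℝ≥0∞) :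
    (μ.withDensity ρ).map e = (μ.map e).withDensity (ρ ∘ e.symm) := by
  ext s hs
  rw [e.map_apply, withDensity_apply _ (e.measurable hs), withDensity_apply _ hs,
    e.restrict_map, lintegral_map_equiv]
  simp

section Cocycle

variable {G X : Type*} [Group G] [MulAction G X] [MeasurableSpace X] {μ : Measure X}
  {r : G → X → ℝ≥0∞}

lemma density_one_ae_eq [SigmaFinite μ] (hr : ∀ g, Measurable (r g))
    (hrn : ∀ g : G, μ.map (g • ·) = μ.withDensity (r g)) : r 1 =ᵐ[μ] 1 := by
  have h : μ.withDensity (r 1) = μ.withDensity 1 := by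
    rw [← hrn, withDensity_one]
    simp only [one_smul, Measure.map_id']
  exact (withDensity_eq_iff_of_sigmaFinite (hr 1).aemeasurable measurable_one.aemeasurable).1 h

variable [MeasurableConstSMul G X]

lemma quasiMeasurePreserving_smul_of_map_eq_withDensity
    (hrn : ∀ g : G, μ.map (g • ·) = μ.withDensity (r g)) (g : G) :
    Measure.QuasiMeasurePreserving (g • · : X → X) μ μ :=
  ⟨measurable_const_smul g, by rw [hrn g]; exact withDensity_absolutelyContinuous μ _⟩

variable [SigmaFinite μ]

lemma density_mul_ae_eq (hr : ∀ g, Measurable (r g))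
    (hrn : ∀ g : G, μ.map (g • ·) = μ.withDensity (r g)) (a b : G) :
    r (a * b) =ᵐ[μ] fun x => r a x * r b (a⁻¹ • x) := by
  have hb : Measurable fun x => r b (a⁻¹ • x) := (hr b).comp (measurable_const_smul a⁻¹)
  refine (withDensity_eq_iff_of_sigmaFinite (hr _).aemeasurable
    ((hr a).mul hb).aemeasurable).1 ?_
  have hmap : μ.map ((a * b) • ·) = (μ.map (b • ·)).map (MeasurableEquiv.smul a) := by
    rw [MeasurableEquiv.smul_apply, Measure.map_map (measurable_const_smul a)
      (measurable_const_smul b)]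
    simp only [Function.comp_def, mul_smul]
  rw [← hrn, hmap, hrn, MeasurableEquiv.map_withDensity, MeasurableEquiv.smul_apply, hrn,
    withDensity_mul μ (hr a) hb, MeasurableEquiv.symm_smul]
  rfl

lemma density_ae_ne_zero_ne_top (hr : ∀ g, Measurable (r g))
    (hrn : ∀ g : G, μ.map (g • ·) = μ.withDensity (r g)) (g : G) :
    ∀ᵐ x ∂μ, r g x ≠ 0 ∧ r g x ≠ ∞ := by
  filter_upwards [density_mul_ae_eq hr hrn g g⁻¹, density_one_ae_eq hr hrn] with x hmul hone
  have h : r g x * r g⁻¹ (g⁻¹ • x) = 1 := by rw [← hmul, mul_inv_cancel, hone, Pi.one_apply]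
  exact ⟨left_ne_zero_of_mul_eq_one h,
    (ENNReal.lt_top_of_mul_ne_top_left (h ▸ ENNReal.one_ne_top)
      (right_ne_zero_of_mul_eq_one h)).ne⟩

end Cocycle

section MaxWeight

variable {G X : Type*} [Group G]

/-- The `g` for which `g • x` is an atom of maximal weight of the orbit measure
`μₓ (g • x) = r g⁻¹ x`. -/
def maxWeightSet (r : G → X → ℝ≥0∞) (x : X) : Set G := {g | ∀ h, r h⁻¹ x ≤ r g⁻¹ x}

variable {r : G → X → ℝ≥0∞} {x : X} {g : G}

lemma measurableSet_mem_maxWeightSet [Countable G] [MeasurableSpace X]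
    (hr : ∀ g, Measurable (r g)) (g : G) : MeasurableSet {x | g ∈ maxWeightSet r x} :=
  measurableSet_setOfPred.2 <| Measurable.forall fun h => (hr h⁻¹).le' (hr g⁻¹)

variable [MulAction G X]

lemma mem_maxWeightSet_smul_iff (hmul : ∀ k, r (g⁻¹ * k⁻¹) x = r g⁻¹ x * r k⁻¹ (g • x))
    (h0 : r g⁻¹ x ≠ 0) (htop : r g⁻¹ x ≠ ∞) (k : G) :
    k ∈ maxWeightSet r (g • x) ↔ k * g ∈ maxWeightSet r x := by
  have hle : ∀ j k : G, r j⁻¹ (g • x) ≤ r k⁻¹ (g • x) ↔ r (j * g)⁻¹ x ≤ r (k * g)⁻¹ x := by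
    intro j k
    rw [mul_inv_rev, mul_inv_rev, hmul, hmul, ENNReal.mul_le_mul_iff_right h0 htop]
  simp only [maxWeightSet, Set.mem_ofPred_eq, hle]
  exact ((Equiv.mulRight g).forall_congr_right (q := fun h => r h⁻¹ x ≤ r (k * g)⁻¹ x))

lemma image_smul_maxWeightSet_smul (hmul : ∀ k, r (g⁻¹ * k⁻¹) x = r g⁻¹ x * r k⁻¹ (g • x))
    (h0 : r g⁻¹ x ≠ 0) (htop : r g⁻¹ x ≠ ∞) :
    (· • g • x) '' maxWeightSet r (g • x) = (· • x) '' maxWeightSet r x := by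
  have hmem := mem_maxWeightSet_smul_iff hmul h0 htop
  ext y
  constructor
  · rintro ⟨k, hk, rfl⟩
    exact ⟨k * g, (hmem k).1 hk, mul_smul k g x⟩
  · rintro ⟨k, hk, rfl⟩
    refine ⟨k * g⁻¹, (hmem _).2 (by simpa using hk), ?_⟩
    simp only [smul_smul, inv_mul_cancel_right]

variable [Countable G] [MeasurableSpace X] [MeasurableConstSMul G X] {μ : Measure X}
  [SigmaFinite μ]

lemma ae_image_smul_maxWeightSet_smul (hr : ∀ g, Measurable (r g))
    (hrn : ∀ g : G, μ.map (g • ·) = μ.withDensity (r g)) :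
    ∀ᵐ x ∂μ, ∀ g : G, (· • g • x) '' maxWeightSet r (g • x) = (· • x) '' maxWeightSet r x := by
  refine ae_all_iff.2 fun g => ?_
  have hmul : ∀ᵐ x ∂μ, ∀ k : G, r (g⁻¹ * k⁻¹) x = r g⁻¹ x * r k⁻¹ (g • x) :=
    ae_all_iff.2 fun k => (density_mul_ae_eq hr hrn g⁻¹ k⁻¹).mono fun x hx => by simpa using hx
  filter_upwards [hmul, density_ae_ne_zero_ne_top hr hrn g⁻¹] with x hx hpos
  exact image_smul_maxWeightSet_smul hx hpos.1 hpos.2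

end MaxWeight

section Selection

variable {G X : Type*} [Group G] [MulAction G X] [MeasurableSpace X]

lemma exists_smul_invariant_measurableSet_of_ae [Countable G] {μ : Measure X}
    (hqmp : ∀ g : G, Measure.QuasiMeasurePreserving (g • · : X → X) μ μ) {p : X → Prop}
    (hp : ∀ᵐ x ∂μ, p x) :
    ∃ Ω : Set X, MeasurableSet Ω ∧ μ Ωᶜ = 0 ∧ (∀ g : G, ∀ x ∈ Ω, g • x ∈ Ω) ∧ ∀ x ∈ Ω, p x := by
  obtain ⟨Ω₀, hΩ₀ae, hΩ₀meas, hΩ₀p⟩ := hp.exists_measurable_mem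
  refine ⟨⋂ g : G, (g • ·) ⁻¹' Ω₀, .iInter fun g => (hqmp g).measurable hΩ₀meas, ?_, ?_, ?_⟩
  · rw [Set.compl_iInter]
    exact measure_iUnion_null fun g => (hqmp g).preimage_null (mem_ae_iff.1 hΩ₀ae)
  · intro g x hx
    simp only [Set.mem_iInter, Set.mem_preimage] at hx ⊢
    intro k
    simpa [mul_smul] using hx (k * g)
  · intro x hx
    exact hΩ₀p x (by simpa using Set.mem_iInter.1 hx 1)

lemma exists_measurable_smul_selection [Countable G] [MeasurableConstSMul G X]
    {p : G → X → Prop} (hp : ∀ g, Measurable (p g)) :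
    ∃ σ : X → X, Measurable σ ∧ (∀ x, σ x ∈ MulAction.orbit G x) ∧
      ∀ x g, p g x → ∃ g', p g' x ∧ σ x = g' • x := by
  classical
  obtain ⟨e, he⟩ := exists_surjective_nat G
  have hex : ∀ x, ∃ n, p (e n) x ∨ ∀ k, ¬p (e k) x := fun x => by
    by_cases h : ∃ k, p (e k) x
    · obtain ⟨k, hk⟩ := h
      exact ⟨k, .inl hk⟩
    · exact ⟨0, .inr (not_exists.1 h)⟩
  refine ⟨fun x => e (Nat.find (hex x)) • x,
    Measurable.find (fun n => measurable_const_smul (e n))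
      (fun n => measurableSet_setOfPred.2 <| (hp _).or <| Measurable.forall fun k => (hp _).not)
      hex,
    fun x => ⟨_, rfl⟩, fun x g hx => ?_⟩
  obtain ⟨n, rfl⟩ := he g
  rcases Nat.find_spec (hex x) with h | h
  · exact ⟨_, h, rfl⟩
  · exact absurd hx (h n)

lemma exists_measurable_smul_selection_least [Countable G] [MeasurableConstSMul G X]
    {S : X → Set G} (hS : ∀ g, MeasurableSet {x | g ∈ S x}) {f : X → ℝ} (hf : Measurable f) :
    ∃ σ : X → X, Measurable σ ∧ (∀ x, σ x ∈ MulAction.orbit G x) ∧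
      ∀ x, (S x).Nonempty → (S x).Finite →
        σ x ∈ (· • x) '' S x ∧ ∀ y ∈ (· • x) '' S x, f (σ x) ≤ f y := by
  have hS' (g : G) : Measurable fun x => g ∈ S x := measurableSet_setOfPred.1 (hS g)
  obtain ⟨σ, hσ, horb, hsel⟩ := exists_measurable_smul_selection
    (p := fun g x => g ∈ S x ∧ ∀ k ∈ S x, f (g • x) ≤ f (k • x)) fun g =>
      (hS' g).and <| Measurable.forall fun k => (hS' k).imp <|
        (hf.comp (measurable_const_smul g)).le' (hf.comp (measurable_const_smul k))
  refine ⟨σ, hσ, horb, fun x hne hfin => ?_⟩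
  obtain ⟨g, hg, hmin⟩ := Set.exists_min_image (S x) (fun g => f (g • x)) hfin hne
  obtain ⟨g', ⟨hg', hmin'⟩, hσx⟩ := hsel x g ⟨hg, hmin⟩
  rw [hσx]
  exact ⟨⟨g', hg', rfl⟩, by rintro _ ⟨k, hk, rfl⟩; exact hmin' k hk⟩

end Selection

section Wandering

variable {G X : Type*} [Group G] [MulAction G X] {E : Set X} {π : X → X}

lemma pairwise_disjoint_smul_inter_fixedPoints (hfree : ∀ x ∈ E, ∀ g : G, g • x = x → g = 1)
    (hinv : ∀ x ∈ E, ∀ g : G, π (g • x) = π x) :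
    Pairwise fun g h : G =>
      Disjoint (g • (E ∩ Function.fixedPoints π)) (h • (E ∩ Function.fixedPoints π)) := by
  intro g h hgh
  refine Set.disjoint_left.2 fun y hyg hyh => ?_
  obtain ⟨w, ⟨hwE, hwπ⟩, rfl⟩ := Set.mem_smul_set.1 hyg
  obtain ⟨w', ⟨-, hw'π⟩, hw'⟩ := Set.mem_smul_set.1 hyh
  have hw'w : w' = (h⁻¹ * g) • w := by rw [mul_smul, ← hw', inv_smul_smul]
  have hfix : (h⁻¹ * g) • w = w := by
    rw [← hw'w, ← hw'π.eq, ← hwπ.eq, hw'w, hinv w hwE]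
  exact hgh (inv_mul_eq_one.1 (hfree w hwE _ hfix)).symm

lemma subset_iUnion_smul_inter_fixedPoints (hE : ∀ g : G, ∀ x ∈ E, g • x ∈ E)
    (horb : ∀ x, π x ∈ MulAction.orbit G x) (hinv : ∀ x ∈ E, ∀ g : G, π (g • x) = π x) :
    E ⊆ ⋃ g : G, g • (E ∩ Function.fixedPoints π) := by
  intro x hx
  obtain ⟨g, hg⟩ := MulAction.mem_orbit_iff.1 (horb x)
  refine Set.mem_iUnion.2 ⟨g⁻¹, g • x, ⟨hE g x hx, ?_⟩, inv_smul_smul g x⟩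
  change π (g • x) = g • x
  rw [hinv x hx, ← hg]

end Wandering

/-- If for a.e. `x` in a `G`-invariant set `A` the set `M_x` of maximal-weight atoms
of the orbit measure `μ_x(g • x) = r g⁻¹ x` is nonempty and finite, then `A` admits a
measurable orbit selection and is contained mod 0 in the dissipative part (the union
of translates of a wandering set). -/
theorem stmt_15 {G X : Type*} [Group G] [Countable G] [MeasurableSpace X]
    [StandardBorelSpace X] [MulAction G X]
    (μ : Measure X) [IsProbabilityMeasure μ]
    (hmeas : ∀ g : G, Measurable (fun x : X => g • x))
    (hfree : ∀ᵐ x ∂μ, ∀ g : G, g • x = x → g = 1)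
    (r : G → X → ℝ≥0∞) (hr : ∀ g : G, Measurable (r g))
    (hrn : ∀ g : G, μ.map (fun x : X => g • x) = μ.withDensity (r g))
    (A : Set X) (hA : MeasurableSet A)
    (hAinv : ∀ g : G, (fun x : X => g • x) '' A = A)
    (hmax : ∀ᵐ x ∂μ, x ∈ A →
      {g : G | ∀ h : G, r h⁻¹ x ≤ r g⁻¹ x}.Nonempty ∧
      {g : G | ∀ h : G, r h⁻¹ x ≤ r g⁻¹ x}.Finite) :
    (∃ π : X → X, Measurable π ∧
        (∀ g : G, ∀ᵐ x ∂μ, x ∈ A → π (g • x) = π x) ∧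
        (∀ᵐ x ∂μ, x ∈ A → π x ∈ MulAction.orbit G x)) ∧
    (∃ W : Set X, MeasurableSet W ∧
        (∀ g h : G, g ≠ h → μ ((g • W) ∩ (h • W)) = 0) ∧
        μ (A \ ⋃ g : G, g • W) = 0) := by
  have : MeasurableConstSMul G X := ⟨hmeas⟩
  have hAsmul : ∀ g : G, ∀ x ∈ A, g • x ∈ A := fun g x hx => hAinv g ▸ Set.mem_image_of_mem _ hx
  obtain ⟨Ω, hΩmeas, hΩnull, hΩinv, hΩgood⟩ := exists_smul_invariant_measurableSet_of_ae
    (quasiMeasurePreserving_smul_of_map_eq_withDensity hrn)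
    (hfree.and ((ae_image_smul_maxWeightSet_smul hr hrn).and hmax))
  obtain ⟨f, hf⟩ := exists_measurableEmbedding_real X
  obtain ⟨π, hπmeas, hπorb, hπleast⟩ := exists_measurable_smul_selection_least
    (measurableSet_mem_maxWeightSet hr) hf.measurable
  have hπinv : ∀ x ∈ Ω ∩ A, ∀ g : G, π (g • x) = π x := by
    rintro x ⟨hxΩ, hxA⟩ g
    obtain ⟨-, hM, hS⟩ := hΩgood x hxΩ
    obtain ⟨-, -, hSg⟩ := hΩgood (g • x) (hΩinv g x hxΩ)
    obtain ⟨hx, hxle⟩ := hπleast x (hS hxA).1 (hS hxA).2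
    obtain ⟨hgx, hgxle⟩ := hπleast (g • x) (hSg (hAsmul g x hxA)).1 (hSg (hAsmul g x hxA)).2
    rw [hM g] at hgx hgxle
    exact hf.injective (le_antisymm (hgxle _ hx) (hxle _ hgx))
  have hE : ∀ g : G, ∀ x ∈ Ω ∩ A, g • x ∈ Ω ∩ A := fun g x hx =>
    ⟨hΩinv g x hx.1, hAsmul g x hx.2⟩
  refine ⟨⟨π, hπmeas, fun g => ?_, .of_forall fun x _ => hπorb x⟩,
    (Ω ∩ A) ∩ Function.fixedPoints π,
    (hΩmeas.inter hA).inter (measurableSet_eq_fun hπmeas measurable_id), fun g h hgh => ?_, ?_⟩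
  · filter_upwards [mem_ae_iff.2 hΩnull] with x hxΩ hxA using hπinv x ⟨hxΩ, hxA⟩ g
  · rw [(pairwise_disjoint_smul_inter_fixedPoints (fun x hx => (hΩgood x hx.1).1) hπinv
      hgh).inter_eq, measure_empty]
  · refine measure_mono_null (fun x hx => ?_) hΩnull
    exact fun hxΩ => hx.2 (subset_iUnion_smul_inter_fixedPoints hE hπorb hπinv ⟨hxΩ, hx.1⟩)
end
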